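/- For every δ > 0 one has C_3(m) ≪_δ m^{3+δ} for all integers m ≥ 1. -/

import Mathlib

open Finset Filter

noncomputable section

/-- `S ℓ p = ∑_{n ≤ ℓ} (n/p)`, the quadratic character sum (Legendre symbol for odd prime `p`). -/
def S (ℓ p : ℕ) : ℤ := ∑ n ∈ Finset.Icc 1 ℓ, jacobiSym (n : ℤ) p

/-- the first-passage time `f_ε(p) = min {ℓ ≥ 1 : S_ℓ(p) < ε ℓ}`. -/
def fpt (ε : ℝ) (p : ℕ) : ℕ := sInf {ℓ : ℕ | 1 ≤ ℓ ∧ ((S ℓ p : ℝ)) < ε * ℓ}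

/-- the odd primes up to a real number `x`. -/
def oddPrimesUpTo (x : ℝ) : Finset ℕ :=
  (Finset.range (⌊x⌋₊ + 1)).filter (fun p => p.Prime ∧ p ≠ 2)

/-- `π_odd(x)`, the number of odd primes up to `x`. -/
def piOdd (x : ℝ) : ℕ := (oddPrimesUpTo x).card

/-- `P_ℓ(x)`, the density of odd primes `p ≤ x` with `S_ℓ(p) ≥ ε ℓ`. -/
def Pdens (ε : ℝ) (ℓ : ℕ) (x : ℝ) : ℝ :=
  (((oddPrimesUpTo x).filter (fun p => ε * ℓ ≤ (S ℓ p : ℝ))).card : ℝ) / (piOdd x : ℝ)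

/-- `a_m(x) = N_m(x)/π_odd(x)`, the proportion of odd primes `p ≤ x` with `f_ε(p) > m`. -/
def aCoef (ε : ℝ) (m : ℕ) (x : ℝ) : ℝ :=
  (((oddPrimesUpTo x).filter (fun p => m < fpt ε p)).card : ℝ) / (piOdd x : ℝ)

/-- `c_u(ℓ)`, the number of triples `(a,b,c) ∈ {1,…,ℓ}³` with `abc = u`. -/
def cCoef (ℓ u : ℕ) : ℕ :=
  ((Finset.Icc 1 ℓ ×ˢ Finset.Icc 1 ℓ ×ˢ Finset.Icc 1 ℓ).filter
    (fun t => t.1 * t.2.1 * t.2.2 = u)).card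

/-- `C_3(ℓ) = ∑_{u,v ≤ ℓ³, uv = □} c_u(ℓ) c_v(ℓ)`. -/
def C3 (ℓ : ℕ) : ℕ :=
  ∑ q ∈ (Finset.Icc 1 (ℓ ^ 3) ×ˢ Finset.Icc 1 (ℓ ^ 3)).filter (fun q => IsSquare (q.1 * q.2)),
    cCoef ℓ q.1 * cCoef ℓ q.2

/-!
`C3 m` counts the pairs of triples `(a, b, c), (d, e, f) ∈ [1, m]³` with `abc · def = k²`
a square; then `k ≤ m³`, the five entries `a, …, e` divide `k²`, and `f` is determined by
them and `k`. Hence `C3 m ≤ ∑_{k ≤ m³} d(k²)⁵`, and the divisor bound `d(n) ≪_ε n^ε`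
gives `C3 m ≪_δ m³ · m^δ`.
-/

theorem add_one_le_pow_of_two_le {x : ℝ} (hx : 2 ≤ x) (e : ℕ) : (e : ℝ) + 1 ≤ x ^ e := by
  have := one_add_mul_sub_le_pow (by linarith : (-1 : ℝ) ≤ x) e
  nlinarith [(e.cast_nonneg : (0 : ℝ) ≤ e)]

theorem add_one_le_mul_pow_of_one_lt {x : ℝ} (hx : 1 < x) (e : ℕ) :
    (e : ℝ) + 1 ≤ (1 + (Real.log x)⁻¹) * x ^ e := by
  set L := Real.log x
  have hL : 0 < L := Real.log_pos hx
  have hexp : 1 + e * L ≤ x ^ e := by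
    rw [← Real.exp_log (pow_pos (by linarith) e : 0 < x ^ e), Real.log_pow]
    linarith [Real.add_one_le_exp (e * L)]
  calc (e : ℝ) + 1 ≤ e + 1 + (e * L + L⁻¹) := le_add_of_nonneg_right (by positivity)
    _ = (1 + L⁻¹) * (1 + e * L) := by field_simp; ring
    _ ≤ (1 + L⁻¹) * x ^ e := by gcongr

theorem prod_ite_lt_le_pow {s : Finset ℕ} {B : ℝ} (hB : 1 ≤ B) (T : ℕ) :
    ∏ p ∈ s, (if p < T then B else 1) ≤ B ^ T := by
  rw [prod_ite, prod_const, prod_const, one_pow, mul_one]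
  refine pow_le_pow_right₀ hB ?_
  have hsub : {p ∈ s | p < T} ⊆ range T := fun p hp => mem_range.2 (mem_filter.1 hp).2
  simpa using card_le_card hsub

theorem Nat.prod_primeFactors_rpow_pow_factorization {n : ℕ} (hn : n ≠ 0) (ε : ℝ) :
    ∏ p ∈ n.primeFactors, ((p : ℝ) ^ ε) ^ n.factorization p = (n : ℝ) ^ ε := by
  simp_rw [Real.rpow_pow_comm (Nat.cast_nonneg _)]
  rw [Real.finsetProd_rpow _ _ fun _ _ => by positivity]
  conv_rhs => rw [Nat.prod_primeFactors_pow_factorization hn]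
  push_cast
  rfl

theorem Nat.card_divisors_le_mul_rpow {ε : ℝ} (hε : 0 < ε) :
    ∃ C : ℝ, 0 < C ∧ ∀ n : ℕ, n ≠ 0 → (#n.divisors : ℝ) ≤ C * (n : ℝ) ^ ε := by
  set B : ℝ := 1 + (Real.log (2 ^ ε))⁻¹
  set T : ℕ := ⌈(2 : ℝ) ^ ε⁻¹⌉₊
  have h2ε : 1 < (2 : ℝ) ^ ε := Real.one_lt_rpow (by norm_num) hε
  have hB : 1 ≤ B := le_add_of_nonneg_right (inv_nonneg.2 (Real.log_nonneg h2ε.le))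
  -- prime powers `p ^ e` with `p ≥ T` satisfy `e + 1 ≤ p ^ (e ε)`; the fewer than `T` others
  -- lose at most a factor `B` each
  have factor_le : ∀ p : ℕ, p.Prime → ∀ e : ℕ,
      (e : ℝ) + 1 ≤ (if p < T then B else 1) * ((p : ℝ) ^ ε) ^ e := by
    intro p hp e
    have hp2 : (2 : ℝ) ≤ p := by exact_mod_cast hp.two_le
    split_ifs with hpT
    · calc (e : ℝ) + 1 ≤ B * ((2 : ℝ) ^ ε) ^ e := add_one_le_mul_pow_of_one_lt h2ε e
        _ ≤ B * ((p : ℝ) ^ ε) ^ e := by gcongr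
    · rw [one_mul]
      refine add_one_le_pow_of_two_le ?_ e
      calc (2 : ℝ) = ((2 : ℝ) ^ ε⁻¹) ^ ε := by
            rw [← Real.rpow_mul (by norm_num), inv_mul_cancel₀ hε.ne', Real.rpow_one]
        _ ≤ (p : ℝ) ^ ε := by
            gcongr
            exact (Nat.le_ceil _).trans (by exact_mod_cast not_lt.1 hpT)
  refine ⟨B ^ T, by positivity, fun n hn => ?_⟩
  calc (#n.divisors : ℝ) = ∏ p ∈ n.primeFactors, ((n.factorization p : ℝ) + 1) := by
        rw [Nat.card_divisors hn]; push_cast; rfl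
    _ ≤ ∏ p ∈ n.primeFactors,
          (if p < T then B else 1) * ((p : ℝ) ^ ε) ^ n.factorization p :=
        prod_le_prod (fun _ _ => by positivity)
          fun p hp => factor_le p (Nat.prime_of_mem_primeFactors hp) _
    _ = (∏ p ∈ n.primeFactors, if p < T then B else 1) * (n : ℝ) ^ ε := by
        rw [prod_mul_distrib, Nat.prod_primeFactors_rpow_pow_factorization hn]
    _ ≤ B ^ T * (n : ℝ) ^ ε := by gcongr; exact prod_ite_lt_le_pow hB T

def triples (m : ℕ) : Finset (ℕ × ℕ × ℕ) := Icc 1 m ×ˢ Icc 1 m ×ˢ Icc 1 m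

def tripleProd (t : ℕ × ℕ × ℕ) : ℕ := t.1 * t.2.1 * t.2.2

theorem tripleProd_mem_Icc {m : ℕ} {t : ℕ × ℕ × ℕ} (ht : t ∈ triples m) :
    tripleProd t ∈ Icc 1 (m ^ 3) := by
  obtain ⟨a, b, c⟩ := t
  simp only [triples, mem_product, mem_Icc] at ht
  obtain ⟨⟨ha, ha'⟩, ⟨hb, hb'⟩, hc, hc'⟩ := ht
  refine mem_Icc.2 ⟨Nat.one_le_iff_ne_zero.2 (by unfold tripleProd; positivity), ?_⟩
  calc tripleProd (a, b, c) ≤ m * m * m := by unfold tripleProd; gcongr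
    _ = m ^ 3 := by ring

def squarePairs (m : ℕ) : Finset ((ℕ × ℕ × ℕ) × (ℕ × ℕ × ℕ)) :=
  {p ∈ triples m ×ˢ triples m | IsSquare (tripleProd p.1 * tripleProd p.2)}

theorem C3_eq_card_squarePairs (m : ℕ) : C3 m = #(squarePairs m) := by
  rw [card_eq_sum_card_fiberwise (f := fun p => (tripleProd p.1, tripleProd p.2))
    (t := {q ∈ Icc 1 (m ^ 3) ×ˢ Icc 1 (m ^ 3) | IsSquare (q.1 * q.2)})]
  · refine sum_congr rfl fun ⟨u, v⟩ hq => ?_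
    have hsq : IsSquare (u * v) := (mem_filter.1 hq).2
    change #{t ∈ triples m | tripleProd t = u} * #{t ∈ triples m | tripleProd t = v} = _
    rw [← card_product]
    congr 1
    ext ⟨t, t'⟩
    simp only [squarePairs, mem_product, mem_filter, Prod.ext_iff]
    constructor
    · rintro ⟨⟨ht, rfl⟩, ht', rfl⟩
      exact ⟨⟨⟨ht, ht'⟩, hsq⟩, rfl, rfl⟩
    · rintro ⟨⟨⟨ht, ht'⟩, -⟩, h, h'⟩
      exact ⟨⟨ht, h⟩, ht', h'⟩
  · intro p hp
    obtain ⟨hpair, hsq⟩ := mem_filter.1 hp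
    obtain ⟨ht, ht'⟩ := mem_product.1 hpair
    exact mem_filter.2 ⟨mem_product.2 ⟨tripleProd_mem_Icc ht, tripleProd_mem_Icc ht'⟩, hsq⟩

theorem Nat.sqrt_mul_self_of_isSquare {n : ℕ} (h : IsSquare n) : Nat.sqrt n * Nat.sqrt n = n :=
  (Nat.exists_mul_self n).1 (h.imp fun _ hr => hr.symm)

theorem Nat.sqrt_mul_mem_Icc {u v N : ℕ} (hu : u ∈ Icc 1 N) (hv : v ∈ Icc 1 N) :
    Nat.sqrt (u * v) ∈ Icc 1 N := by
  obtain ⟨hu1, huN⟩ := mem_Icc.1 hu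
  obtain ⟨hv1, hvN⟩ := mem_Icc.1 hv
  refine mem_Icc.2 ⟨Nat.le_sqrt.2 (by nlinarith), ?_⟩
  calc Nat.sqrt (u * v) ≤ Nat.sqrt (N * N) := Nat.sqrt_le_sqrt (Nat.mul_le_mul huN hvN)
    _ = N := Nat.sqrt_eq N

theorem C3_le_sum_card_divisors_sq_pow (m : ℕ) :
    C3 m ≤ ∑ k ∈ Icc 1 (m ^ 3), #(k ^ 2).divisors ^ 5 := by
  set D : ℕ → Finset (ℕ × ℕ × ℕ × ℕ × ℕ) := fun k =>
    let Dk := (k ^ 2).divisors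
    Dk ×ˢ Dk ×ˢ Dk ×ˢ Dk ×ˢ Dk
  have hD : ∀ k, #(D k) = #(k ^ 2).divisors ^ 5 := fun k => by simp only [D, card_product]; ring
  simp_rw [← hD, ← card_sigma, C3_eq_card_squarePairs]
  refine card_le_card_of_injOn (fun p => ⟨Nat.sqrt (tripleProd p.1 * tripleProd p.2),
    (p.1.1, p.1.2.1, p.1.2.2, p.2.1, p.2.2.1)⟩) ?_ ?_
  · rintro ⟨⟨a, b, c⟩, d, e, f⟩ hp
    obtain ⟨hpair, hsq⟩ := mem_filter.1 hp
    obtain ⟨ht, ht'⟩ := mem_product.1 hpair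
    set k := Nat.sqrt (tripleProd (a, b, c) * tripleProd (d, e, f))
    have hk1 : k ∈ Icc 1 (m ^ 3) :=
      Nat.sqrt_mul_mem_Icc (tripleProd_mem_Icc ht) (tripleProd_mem_Icc ht')
    have hk2 : k ^ 2 = a * b * c * (d * e * f) := by
      rw [sq]; exact Nat.sqrt_mul_self_of_isSquare hsq
    have hk0 : k ^ 2 ≠ 0 := pow_ne_zero 2 (by linarith [(mem_Icc.1 hk1).1])
    refine mem_sigma.2 ⟨hk1, ?_⟩
    simp only [D, mem_product, Nat.mem_divisors]
    exact ⟨⟨Dvd.intro (b * c * (d * e * f)) (by rw [hk2]; ring), hk0⟩,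
      ⟨Dvd.intro (a * c * (d * e * f)) (by rw [hk2]; ring), hk0⟩,
      ⟨Dvd.intro (a * b * (d * e * f)) (by rw [hk2]; ring), hk0⟩,
      ⟨Dvd.intro (a * b * c * (e * f)) (by rw [hk2]; ring), hk0⟩,
      ⟨Dvd.intro (a * b * c * (d * f)) (by rw [hk2]; ring), hk0⟩⟩
  · rintro ⟨⟨a, b, c⟩, d, e, f⟩ hp ⟨⟨a', b', c'⟩, d', e', f'⟩ hp' heq
    simp only [Sigma.mk.injEq, heq_eq_eq, Prod.mk.injEq] at heq
    obtain ⟨hk, rfl, rfl, rfl, rfl, rfl⟩ := heq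
    have hN := Nat.sqrt_mul_self_of_isSquare (mem_filter.1 hp).2
    have hN' := Nat.sqrt_mul_self_of_isSquare (mem_filter.1 hp').2
    obtain ⟨⟨⟨ha, -⟩, ⟨hb, -⟩, hc, -⟩, ⟨hd, -⟩, ⟨he, -⟩, -⟩ :
        ((1 ≤ a ∧ a ≤ m) ∧ (1 ≤ b ∧ b ≤ m) ∧ 1 ≤ c ∧ c ≤ m) ∧
        (1 ≤ d ∧ d ≤ m) ∧ (1 ≤ e ∧ e ≤ m) ∧ 1 ≤ f ∧ f ≤ m := by
      simpa [triples] using (mem_filter.1 hp).1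
    have hprod : a * b * c * (d * e) * f = a * b * c * (d * e) * f' := by
      calc a * b * c * (d * e) * f = tripleProd (a, b, c) * tripleProd (d, e, f) := by
            unfold tripleProd; ring
        _ = tripleProd (a, b, c) * tripleProd (d, e, f') := by rw [← hN, ← hN', hk]
        _ = a * b * c * (d * e) * f' := by unfold tripleProd; ring
    rw [Nat.eq_of_mul_eq_mul_left (by positivity) hprod]

/-- For every `δ > 0` one has `C_3(m) ≪_δ m^(3+δ)` for all `m ≥ 1`. -/
theorem stmt2 (δ : ℝ) (hδ : 0 < δ) :
    ∃ C : ℝ, 0 < C ∧ ∀ m : ℕ, 1 ≤ m → (C3 m : ℝ) ≤ C * (m : ℝ) ^ ((3 : ℝ) + δ) := by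
  obtain ⟨C, hC, hdiv⟩ := Nat.card_divisors_le_mul_rpow (ε := δ / 30) (by positivity)
  refine ⟨C ^ 5, by positivity, fun m _ => ?_⟩
  have hm : (0 : ℝ) ≤ m := m.cast_nonneg
  have term_le :
      ∀ k ∈ Icc 1 (m ^ 3), (#(k ^ 2).divisors : ℝ) ^ 5 ≤ C ^ 5 * (m : ℝ) ^ δ := by
    intro k hk
    obtain ⟨hk1, hkm⟩ := mem_Icc.1 hk
    have hk2 : ((k ^ 2 : ℕ) : ℝ) ≤ (m : ℝ) ^ 6 := by
      exact_mod_cast (Nat.pow_le_pow_left hkm 2).trans_eq (by ring)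
    calc (#(k ^ 2).divisors : ℝ) ^ 5 ≤ (C * ((k ^ 2 : ℕ) : ℝ) ^ (δ / 30)) ^ 5 := by
          gcongr; exact hdiv _ (by positivity)
      _ ≤ (C * ((m : ℝ) ^ 6) ^ (δ / 30)) ^ 5 := by gcongr
      _ = C ^ 5 * (m : ℝ) ^ δ := by
          rw [mul_pow, ← Real.rpow_natCast_mul hm, ← Real.rpow_mul_natCast hm]
          congr 2
          push_cast
          ring
  calc (C3 m : ℝ) ≤ ∑ k ∈ Icc 1 (m ^ 3), (#(k ^ 2).divisors : ℝ) ^ 5 := by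
        exact_mod_cast C3_le_sum_card_divisors_sq_pow m
    _ ≤ #(Icc 1 (m ^ 3)) • (C ^ 5 * (m : ℝ) ^ δ) := sum_le_card_nsmul _ _ _ term_le
    _ = C ^ 5 * (m : ℝ) ^ ((3 : ℝ) + δ) := by
        rw [Nat.card_Icc, nsmul_eq_mul, Real.rpow_add' hm (by positivity), Real.rpow_ofNat]
        push_cast
        ring

end
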